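/- arXiv:1206.5876 — 8 statements merged into one kernel-verified Lean document; each statement's English description precedes it below -/
import Mathlib

section
/- Let R be a commutative Q-algebra and P ∈ R[y]. Then P is a coordinate of R[y] if and only if the derivative P'(y) is a unit of the ring R[y]. -/
/-!
If `σ X = P` for an automorphism `σ`, then `Q = σ⁻¹ X` satisfies `Q ∘ P = X` and the chain rule
makes `P'` a unit. Conversely, if `P'` is a unit then, dividing the coefficients of `P'` by
positive integers, `P` is an invertible affine polynomial plus a nilpotent one. Composing with the
inverse affine map gives `Q₀` with `P ∘ Q₀ - X` nilpotent, and Newton's iteration for the root of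
`P(T) - X` over `R[X]` turns `Q₀` into a right compositional inverse `Q` of `P`. As `Q'` is again
a unit, `Q` has a right inverse too, which must be `P`.
-/

open Polynomial

namespace Polynomial

variable {R : Type*} [CommRing R]

lemma isUnit_derivative_of_comp_eq_X {P Q : R[X]} (h : P.comp Q = X) :
    IsUnit (derivative Q) := by
  have hd := congrArg derivative h
  rw [derivative_comp, derivative_X] at hd
  exact IsUnit.of_mul_eq_one _ hd

lemma comp_eq_X_of_comp_eq_X {P Q S : R[X]} (hPQ : P.comp Q = X) (hQS : Q.comp S = X) :
    Q.comp P = X := by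
  have hSP : S = P := by
    calc S = (P.comp Q).comp S := by rw [hPQ, X_comp]
      _ = P := by rw [comp_assoc, hQS, comp_X]
  rwa [← hSP]

lemma _root_.AlgEquiv.symm_X_comp_apply_X (σ : R[X] ≃ₐ[R] R[X]) : (σ.symm X).comp (σ X) = X := by
  rw [comp_eq_aeval, aeval_algHom_apply, aeval_X_left_apply, AlgEquiv.apply_symm_apply]

/-- Newton's method over `R[X]`, applied to the polynomial `P(T) - X` in `T`. -/
lemma exists_comp_eq_X_of_isNilpotent {P Q₀ : R[X]} (hP : IsUnit (derivative P))
    (hQ₀ : IsNilpotent (P.comp Q₀ - X)) : ∃ Q, P.comp Q = X := by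
  have aeval_eq (Q : R[X]) : aeval Q (P.map C - C X) = P.comp Q - X := by
    simp [eval_map, comp]
  have hunit : IsUnit (aeval Q₀ (derivative (P.map C - C X))) := by
    simpa [derivative_map, eval_map, comp] using hP.map (compRingHom Q₀)
  obtain ⟨Q, -, hQ⟩ := (existsUnique_nilpotent_sub_and_aeval_eq_zero
    (by rwa [aeval_eq]) hunit).exists
  exact ⟨Q, sub_eq_zero.mp (by rwa [aeval_eq] at hQ)⟩

lemma isUnit_natCast_of_ne_zero [Algebra ℚ R] {n : ℕ} (hn : n ≠ 0) : IsUnit (n : R) := by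
  simpa using (isUnit_iff_ne_zero.mpr (Nat.cast_ne_zero.mpr hn : (n : ℚ) ≠ 0)).map (algebraMap ℚ R)

variable {P : R[X]}

lemma isUnit_coeff_one_of_isUnit_derivative (hP : IsUnit (derivative P)) : IsUnit (P.coeff 1) := by
  simpa [coeff_derivative] using (isUnit_iff_coeff_isUnit_isNilpotent.mp hP).1

lemma isNilpotent_coeff_add_two_of_isUnit_derivative [Algebra ℚ R] (hP : IsUnit (derivative P))
    (n : ℕ) : IsNilpotent (P.coeff (n + 2)) := by
  have h := (isUnit_iff_coeff_isUnit_isNilpotent.mp hP).2 (n + 1) n.succ_ne_zero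
  rw [coeff_derivative] at h
  exact ((isUnit_natCast_of_ne_zero (n + 1).succ_ne_zero).isNilpotent_mul_unit_of_commute_iff
    (Commute.all _ _)).mp (by exact_mod_cast h)

lemma exists_isNilpotent_comp_sub_X_of_isUnit_derivative [Algebra ℚ R]
    (hP : IsUnit (derivative P)) : ∃ Q₀, IsNilpotent (P.comp Q₀ - X) := by
  set a := P.coeff 0
  set c := P.coeff 1
  obtain ⟨b, hcb⟩ := (isUnit_coeff_one_of_isUnit_derivative hP).exists_right_inv
  set M := P - C a - C c * X
  have hM : IsNilpotent M := Polynomial.isNilpotent_iff.mpr fun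
    | 0 => by simp [M, a]
    | 1 => by simp [M, c]
    | n + 2 => by
      simpa [M, coeff_C, coeff_X] using isNilpotent_coeff_add_two_of_isUnit_derivative hP n
  refine ⟨C b * (X - C a), ?_⟩
  have hCcb : C c * C b = 1 := by rw [← C_mul, hcb, C_1]
  have hM_comp : P.comp (C b * (X - C a)) - X = M.comp (C b * (X - C a)) := by
    simp only [M, sub_comp, mul_comp, C_comp, X_comp]
    linear_combination (X - C a) * hCcb
  rw [hM_comp]
  exact hM.map (compRingHom _)

lemma exists_comp_eq_X_of_isUnit_derivative [Algebra ℚ R] (hP : IsUnit (derivative P)) :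
    ∃ Q, P.comp Q = X :=
  have ⟨_, hQ₀⟩ := exists_isNilpotent_comp_sub_X_of_isUnit_derivative hP
  exists_comp_eq_X_of_isNilpotent hP hQ₀

end Polynomial

/-- Over a `ℚ`-algebra, `P` is a coordinate of `R[y]` iff `P'` is a unit of `R[y]`. -/
theorem coordinate_iff_derivative_isUnit (R : Type*) [CommRing R] [Algebra ℚ R]
    (P : Polynomial R) :
    (∃ σ : Polynomial R ≃ₐ[R] Polynomial R, σ Polynomial.X = P) ↔
      IsUnit (Polynomial.derivative P) := by
  constructor
  · rintro ⟨σ, rfl⟩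
    exact isUnit_derivative_of_comp_eq_X σ.symm_X_comp_apply_X
  · intro hP
    obtain ⟨Q, hPQ⟩ := exists_comp_eq_X_of_isUnit_derivative hP
    obtain ⟨S, hQS⟩ := exists_comp_eq_X_of_isUnit_derivative (isUnit_derivative_of_comp_eq_X hPQ)
    exact ⟨algEquivOfCompEqX P Q hPQ (comp_eq_X_of_comp_eq_X hPQ hQS), by simp⟩
end

section
/- Let R be a commutative ring and F ∈ R[x,y]. If F is a coordinate of R[x,y] and N ∈ R[x,y] is nilpotent, then F + N is also a coordinate of R[x,y]. -/
/-!
Write the coordinate as `σ y` and pull `N` back to the nilpotent `M = σ⁻¹ N`; it suffices that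
`φ : x ↦ x, y ↦ y + M` is an automorphism. All coefficients of `M` generate a nilpotent ideal `J`
of `R`, and `φ` is the identity modulo `J R[x,y]`. Since `φ` fixes the constants, `D = φ - id`
maps `J^k R[x,y]` into `J^(k+1) R[x,y]`, so `D` is a nilpotent linear endomorphism and
`φ = 1 + D` is invertible.
-/

open MvPolynomial

namespace AlgHom

variable {R A : Type*} [CommRing R] [CommRing A] [Algebra R A] {J : Ideal R}

theorem sub_self_mem_map_pow_succ (φ : A →ₐ[R] A)
    (hφ : ∀ a, φ a - a ∈ J.map (algebraMap R A)) (k : ℕ) {a : A}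
    (ha : a ∈ (J ^ k).map (algebraMap R A)) :
    φ a - a ∈ (J ^ (k + 1)).map (algebraMap R A) := by
  induction ha using Submodule.span_induction with
  | mem _ h =>
    obtain ⟨r, -, rfl⟩ := h
    simp
  | zero => simp
  | add x y _ _ hx hy =>
    convert Ideal.add_mem _ hx hy using 1
    simp only [map_add]
    ring
  | smul c x hx hDx =>
    have hprod : (φ c - c) * x ∈ (J ^ (k + 1)).map (algebraMap R A) := by
      rw [pow_succ', Ideal.map_mul]
      exact Ideal.mul_mem_mul (hφ c) hx
    convert Ideal.add_mem _ (Ideal.mul_mem_left _ (φ c) hDx) hprod using 1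
    simp only [smul_eq_mul, map_mul]
    ring

theorem pow_toLinearMap_sub_id_apply_mem (φ : A →ₐ[R] A)
    (hφ : ∀ a, φ a - a ∈ J.map (algebraMap R A)) (k : ℕ) (a : A) :
    ((φ.toLinearMap - 1 : Module.End R A) ^ k) a ∈ (J ^ k).map (algebraMap R A) := by
  induction k with
  | zero => simp [Ideal.one_eq_top, Ideal.map_top]
  | succ k ih =>
    rw [pow_succ' (φ.toLinearMap - 1 : Module.End R A), Module.End.mul_apply]
    simpa using sub_self_mem_map_pow_succ φ hφ k ih

theorem bijective_of_sub_self_mem_map (hJ : IsNilpotent J) (φ : A →ₐ[R] A)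
    (hφ : ∀ a, φ a - a ∈ J.map (algebraMap R A)) : Function.Bijective φ := by
  obtain ⟨n, hn⟩ := hJ
  have hD : IsNilpotent (φ.toLinearMap - 1 : Module.End R A) := by
    refine ⟨n, LinearMap.ext fun a => ?_⟩
    simpa [hn] using pow_toLinearMap_sub_id_apply_mem φ hφ n a
  have hunit := hD.isUnit_one_add
  rwa [add_sub_cancel, Module.End.isUnit_iff] at hunit

end AlgHom

namespace MvPolynomial

variable {R σ : Type*} [CommRing R]

theorem algHom_sub_mem_of_forall_X_sub_mem {A : Type*} [CommRing A] [Algebra R A]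
    {I : Ideal A} (φ ψ : MvPolynomial σ R →ₐ[R] A) (h : ∀ i, φ (X i) - ψ (X i) ∈ I)
    (p : MvPolynomial σ R) : φ p - ψ p ∈ I := by
  have hmod : (Ideal.Quotient.mkₐ R I).comp φ = (Ideal.Quotient.mkₐ R I).comp ψ :=
    algHom_ext fun i => by simpa [Ideal.Quotient.eq] using h i
  simpa [Ideal.Quotient.eq] using AlgHom.congr_fun hmod p

theorem mem_map_C_span_coeffs (P : MvPolynomial σ R) :
    P ∈ (Ideal.span (P.coeffs : Set R)).map C := by
  refine mem_map_C_iff.mpr fun m => ?_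
  by_cases hm : P.coeff m = 0
  · simp [hm]
  · exact Ideal.subset_span (coeff_mem_coeffs m hm)

theorem isNilpotent_span_coeffs {P : MvPolynomial σ R} (hP : IsNilpotent P) :
    IsNilpotent (Ideal.span (P.coeffs : Set R)) := by
  rw [Ideal.FG.isNilpotent_iff_le_nilradical (Submodule.fg_span P.coeffs.finite_toSet),
    Ideal.span_le]
  intro c hc
  obtain ⟨m, -, rfl⟩ := mem_coeffs_iff.mp hc
  exact isNilpotent_iff.mp hP m

theorem bijective_aeval_update_X_add [DecidableEq σ] (i : σ) {M : MvPolynomial σ R}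
    (hM : IsNilpotent M) :
    Function.Bijective (aeval (Function.update X i (X i + M)) :
      MvPolynomial σ R →ₐ[R] MvPolynomial σ R) := by
  have hX (j : σ) :
      aeval (Function.update X i (X i + M)) (X j : MvPolynomial σ R) -
        AlgHom.id R (MvPolynomial σ R) (X j) ∈
      (Ideal.span (M.coeffs : Set R)).map (algebraMap R (MvPolynomial σ R)) := by
    rcases eq_or_ne j i with rfl | hj
    · simpa using mem_map_C_span_coeffs M
    · simp [hj]
  exact AlgHom.bijective_of_sub_self_mem_map (isNilpotent_span_coeffs hM) _
    (algHom_sub_mem_of_forall_X_sub_mem _ _ hX)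

end MvPolynomial

/-- If `F` is a coordinate of `R[x,y]` and `N` is nilpotent then `F + N` is a coordinate. -/
theorem coordinate_add_nilpotent (R : Type*) [CommRing R]
    (F N : MvPolynomial (Fin 2) R)
    (hF : ∃ σ : MvPolynomial (Fin 2) R ≃ₐ[R] MvPolynomial (Fin 2) R,
      σ (MvPolynomial.X 1) = F)
    (hN : N ∈ nilradical (MvPolynomial (Fin 2) R)) :
    ∃ σ : MvPolynomial (Fin 2) R ≃ₐ[R] MvPolynomial (Fin 2) R,
      σ (MvPolynomial.X 1) = F + N := by
  obtain ⟨σ, rfl⟩ := hF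
  have hM : IsNilpotent (σ.symm N) := (mem_nilradical.mp hN).map σ.symm
  let τ := AlgEquiv.ofBijective _ (bijective_aeval_update_X_add 1 hM)
  refine ⟨τ.trans σ, ?_⟩
  simp [τ]
end

section
/- Let R be an integral domain and let σ, τ be R-algebra automorphisms of R[x,y] with σ(y) = τ(y) =: Y. Then there exist a unit u ∈ R* and a polynomial r ∈ R[y] such that σ(x) = u·τ(x) + r(Y). -/
/-!
The automorphism `φ = τ⁻¹ ∘ σ` fixes `y`, so under `R[x,y] ≃ R[y][x]` it becomes an
`R[y]`-algebra automorphism of `R[y][x]`. Over a domain, degrees multiply under composition, so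
such an automorphism sends `x` to `v·x + b` with `v` a unit of `R[y]`, i.e. a unit of `R`.
Applying `τ` to `φ(x) = v·x + b(y)` gives the claim.
-/

open Polynomial

namespace Polynomial

theorem comp_algEquiv_symm_apply_X {A : Type*} [CommSemiring A] (ψ : A[X] ≃ₐ[A] A[X]) :
    (ψ.symm X).comp (ψ X) = X := by
  rw [comp_eq_aeval]
  simpa using aeval_algHom_apply (ψ : A[X] →ₐ[A] A[X]) X (ψ.symm X)

variable {A : Type*} [CommRing A] [IsDomain A]

theorem natDegree_eq_one_of_comp_eq_X {p q : A[X]} (h : q.comp p = X) :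
    q.natDegree = 1 ∧ p.natDegree = 1 := by
  rw [← mul_eq_one, ← natDegree_comp, h, natDegree_X]

theorem isUnit_leadingCoeff_of_comp_eq_X {p q : A[X]} (h : q.comp p = X) :
    IsUnit p.leadingCoeff := by
  obtain ⟨hq, hp⟩ := natDegree_eq_one_of_comp_eq_X h
  have hlc := congrArg leadingCoeff h
  rw [leadingCoeff_comp (by rw [hp]; exact one_ne_zero), leadingCoeff_X, hq, pow_one] at hlc
  exact IsUnit.of_mul_eq_one_right _ hlc

theorem exists_algEquiv_apply_X_eq (ψ : A[X] ≃ₐ[A] A[X]) :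
    ∃ (u : Aˣ) (b : A), ψ X = C (u : A) * X + C b := by
  have h := comp_algEquiv_symm_apply_X ψ
  have hp := (natDegree_eq_one_of_comp_eq_X h).2
  obtain ⟨u, hu⟩ := isUnit_leadingCoeff_of_comp_eq_X h
  refine ⟨u, (ψ X).coeff 0, ?_⟩
  rw [hu, leadingCoeff, hp]
  exact eq_X_add_C_of_natDegree_le_one hp.le

end Polynomial

namespace MvPolynomial

variable (R : Type*) [CommRing R]

noncomputable def finTwoAlgEquiv : MvPolynomial (Fin 2) R ≃ₐ[R] R[X][X] :=
  (finSuccEquiv R 1).trans (Polynomial.mapAlgEquiv (uniqueAlgEquiv R (Fin 1)))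

variable {R}

@[simp]
theorem finTwoAlgEquiv_X_zero : finTwoAlgEquiv R (X 0) = Polynomial.X := by
  simp [finTwoAlgEquiv, finSuccEquiv_X_zero, coe_mapAlgEquiv]

@[simp]
theorem finTwoAlgEquiv_X_one : finTwoAlgEquiv R (X 1) = Polynomial.C Polynomial.X := by
  rw [finTwoAlgEquiv, AlgEquiv.trans_apply, show (1 : Fin 2) = Fin.succ 0 from rfl,
    finSuccEquiv_X_succ]
  simp [coe_mapAlgEquiv]

theorem finTwoAlgEquiv_symm_X : (finTwoAlgEquiv R).symm Polynomial.X = X 0 := by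
  rw [← finTwoAlgEquiv_X_zero, AlgEquiv.symm_apply_apply]

theorem finTwoAlgEquiv_symm_C (p : R[X]) :
    (finTwoAlgEquiv R).symm (Polynomial.C p) = Polynomial.aeval (X 1) p := by
  have : ((finTwoAlgEquiv R).symm : R[X][X] →ₐ[R] MvPolynomial (Fin 2) R).comp CAlgHom =
      Polynomial.aeval (X 1) := by
    ext
    simp [← finTwoAlgEquiv_X_one]
  exact congr($this p)

theorem exists_algEquiv_apply_X_zero_eq_of_apply_X_one_eq [IsDomain R]
    (φ : MvPolynomial (Fin 2) R ≃ₐ[R] MvPolynomial (Fin 2) R) (hφ : φ (X 1) = X 1) :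
    ∃ (u : Rˣ) (r : R[X]), φ (X 0) = C (u : R) * X 0 + Polynomial.aeval (X 1) r := by
  set E := finTwoAlgEquiv R
  let ψ₀ : R[X][X] ≃ₐ[R] R[X][X] := E.symm.trans (φ.trans E)
  have hψ₀C (p : R[X]) : ψ₀ (Polynomial.C p) = Polynomial.C p := by
    simp only [ψ₀, AlgEquiv.trans_apply, E, finTwoAlgEquiv_symm_C]
    rw [← Polynomial.aeval_algHom_apply, hφ, ← finTwoAlgEquiv_symm_C,
      AlgEquiv.apply_symm_apply]
  obtain ⟨v, b, hv⟩ := exists_algEquiv_apply_X_eq (AlgEquiv.ofRingEquiv (f := ψ₀.toRingEquiv) hψ₀C)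
  obtain ⟨u, hu⟩ : ∃ u : Rˣ, Polynomial.C (u : R) = v := by
    obtain ⟨c, ⟨u, rfl⟩, hc⟩ := Polynomial.isUnit_iff.mp v.isUnit
    exact ⟨u, hc⟩
  refine ⟨u, b, ?_⟩
  calc φ (X 0) = E.symm (ψ₀ Polynomial.X) := by simp [ψ₀, E, finTwoAlgEquiv_symm_X]
    _ = _ := by
      rw [show ψ₀ Polynomial.X = _ from hv, ← hu, map_add, map_mul, finTwoAlgEquiv_symm_C,
        finTwoAlgEquiv_symm_C, finTwoAlgEquiv_symm_X, Polynomial.aeval_C, algebraMap_eq]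

end MvPolynomial

/-- Over a domain, two automorphisms of `R[x,y]` with the same second component differ
by a triangular automorphism: `σ(x) = u·τ(x) + r(Y)` with `u ∈ R*`, `r ∈ R[y]`,
`Y = σ(y) = τ(y)`. -/
theorem automorphisms_with_same_component (R : Type*) [CommRing R] [IsDomain R]
    (σ τ : MvPolynomial (Fin 2) R ≃ₐ[R] MvPolynomial (Fin 2) R)
    (h : σ (MvPolynomial.X 1) = τ (MvPolynomial.X 1)) :
    ∃ (u : Rˣ) (r : Polynomial R),
      σ (MvPolynomial.X 0) = MvPolynomial.C (u : R) * τ (MvPolynomial.X 0) +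
        Polynomial.aeval (σ (MvPolynomial.X 1)) r := by
  obtain ⟨u, r, hx⟩ := MvPolynomial.exists_algEquiv_apply_X_zero_eq_of_apply_X_one_eq
    (σ.trans τ.symm) (by simp [h])
  refine ⟨u, r, ?_⟩
  have hσ : σ (MvPolynomial.X 0) = τ ((σ.trans τ.symm) (MvPolynomial.X 0)) := by simp
  rw [hσ, hx, map_add, map_mul, ← MvPolynomial.algebraMap_eq, AlgEquiv.commutes, h,
    ← Polynomial.aeval_algHom_apply]
end

section
/- Let R be a commutative ring, Q ∈ R[y] and H ∈ R[x,y]. Then Q(H(x,y)) is a coordinate of R[x,y] if and only if Q(y) is a coordinate of R[y] and H(x,y) is a coordinate of R[x,y]. In particular, the coordinates of R[x,y] lying in R[y] are exactly the coordinates of R[y]. -/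
/-!
If `σ` is an automorphism of `R[x,y]` with `σ y = Q(H)`, then `y = Q(σ⁻¹ H)`, and sending every
variable to `X` shows that `Q` has a right compositional inverse `k` in `R[X]`. Such an inverse is
two-sided: `f ↦ f ∘ k` is a surjective endomorphism of `R[X]`, hence injective when `R` is
Noetherian, and in general all coefficients involved lie in a finitely generated, hence Noetherian,
subring. The substitutions `y ↦ Q(y)` and `y ↦ k(y)` fixing the other variables are then inverse
automorphisms of `R[x,y]`, and composing with them passes between the coordinates `H` and `Q(H)`.
-/

open Polynomial

theorem RingHom.injective_of_surjective_of_isNoetherianRing {S : Type*} [Ring S]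
    [IsNoetherianRing S] {φ : S →+* S} (hφ : Function.Surjective φ) :
    Function.Injective φ := by
  let kers : ℕ →o Ideal S := ⟨fun n => RingHom.ker (φ ^ n), monotone_nat_of_le_succ fun n x hx => by
    simp_all [pow_succ']⟩
  obtain ⟨N, hN⟩ := monotone_stabilizes_iff_noetherian.mpr ‹_› kers
  -- every element of `ker φ` is `φ^N y` with `y ∈ ker φ^(N+1) = ker φ^N`
  refine (injective_iff_map_eq_zero φ).mpr fun x hx => ?_
  obtain ⟨y, rfl⟩ := (RingHom.coe_pow φ N ▸ hφ.iterate N) x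
  have hy : y ∈ kers (N + 1) := by simpa [kers, pow_succ'] using hx
  rwa [← hN (N + 1) N.le_succ] at hy

namespace Polynomial

variable {R : Type*} [CommRing R]

theorem comp_eq_X_symm_of_isNoetherianRing [IsNoetherianRing R] {p q : R[X]}
    (h : p.comp q = X) : q.comp p = X := by
  have hsurj : Function.Surjective (compRingHom q) := fun f => ⟨f.comp p, by
    simp [comp_assoc, h]⟩
  apply RingHom.injective_of_surjective_of_isNoetherianRing hsurj
  simp [comp_assoc, h]

theorem comp_eq_X_symm {p q : R[X]} (h : p.comp q = X) : q.comp p = X := by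
  classical
  let T := Subring.closure (↑(p.coeffs ∪ q.coeffs) : Set R)
  have : IsNoetherianRing T := is_noetherian_subring_closure _ (Finset.finite_toSet _)
  have hp : (↑p.coeffs : Set R) ⊆ T := fun x hx => Subring.subset_closure (by simp [hx])
  have hq : (↑q.coeffs : Set R) ⊆ T := fun x hx => Subring.subset_closure (by simp [hx])
  have hinj : Function.Injective (map T.subtype) := map_injective _ Subtype.coe_injective
  rw [← map_toSubring p T hp, ← map_toSubring q T hq, ← map_comp, ← map_X T.subtype] at h ⊢
  rw [comp_eq_X_symm_of_isNoetherianRing (hinj h)]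

theorem exists_algEquiv_X_eq_iff (Q : R[X]) :
    (∃ σ : R[X] ≃ₐ[R] R[X], σ X = Q) ↔ ∃ k : R[X], Q.comp k = X := by
  constructor
  · rintro ⟨σ, rfl⟩
    refine ⟨σ.symm X, ?_⟩
    rw [comp_eq_aeval, aeval_algHom_apply, aeval_X_left_apply, AlgEquiv.symm_apply_apply]
  · rintro ⟨k, hk⟩
    exact ⟨algEquivOfCompEqX Q k hk (comp_eq_X_symm hk), by simp⟩

end Polynomial

namespace MvPolynomial

variable {R ι : Type*} [CommRing R]

theorem exists_comp_eq_X_of_aeval_eq_X {i : ι} {Q : R[X]} {G : MvPolynomial ι R}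
    (h : Polynomial.aeval G Q = X i) : ∃ k : R[X], Q.comp k = Polynomial.X := by
  let π : MvPolynomial ι R →ₐ[R] R[X] := aeval fun _ => Polynomial.X
  refine ⟨π G, ?_⟩
  rw [Polynomial.comp_eq_aeval, Polynomial.aeval_algHom_apply, h, aeval_X]

variable [DecidableEq ι]

noncomputable def substVar (i : ι) (p : R[X]) : MvPolynomial ι R →ₐ[R] MvPolynomial ι R :=
  aeval (Function.update X i (Polynomial.aeval (X i) p))

@[simp]
theorem substVar_X_self (i : ι) (p : R[X]) : substVar i p (X i) = Polynomial.aeval (X i) p := by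
  simp [substVar]

theorem substVar_X_of_ne {i j : ι} (p : R[X]) (h : j ≠ i) : substVar i p (X j) = X j := by
  simp [substVar, h]

theorem substVar_comp_substVar (i : ι) {p q : R[X]} (h : q.comp p = Polynomial.X) :
    (substVar i p).comp (substVar i q) = AlgHom.id R _ := by
  refine algHom_ext fun j => ?_
  rcases eq_or_ne j i with rfl | hj
  · rw [AlgHom.comp_apply, substVar_X_self, ← Polynomial.aeval_algHom_apply, substVar_X_self,
      ← Polynomial.aeval_comp, h, Polynomial.aeval_X, AlgHom.id_apply]
  · simp [substVar_X_of_ne _ hj]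

theorem exists_algEquiv_X_eq_aeval_X (i : ι) {p q : R[X]} (h : p.comp q = Polynomial.X) :
    ∃ Φ : MvPolynomial ι R ≃ₐ[R] MvPolynomial ι R, Φ (X i) = Polynomial.aeval (X i) p :=
  ⟨.ofAlgHom (substVar i p) (substVar i q) (substVar_comp_substVar i (Polynomial.comp_eq_X_symm h))
    (substVar_comp_substVar i h), substVar_X_self i p⟩

theorem exists_algEquiv_X_eq_aeval_iff (i : ι) (Q : R[X]) (H : MvPolynomial ι R) :
    (∃ σ : MvPolynomial ι R ≃ₐ[R] MvPolynomial ι R, σ (X i) = Polynomial.aeval H Q) ↔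
      (∃ τ : R[X] ≃ₐ[R] R[X], τ Polynomial.X = Q) ∧
        ∃ ρ : MvPolynomial ι R ≃ₐ[R] MvPolynomial ι R, ρ (X i) = H := by
  rw [Polynomial.exists_algEquiv_X_eq_iff]
  constructor
  · rintro ⟨σ, hσ⟩
    have hX : Polynomial.aeval (σ.symm H) Q = X i := by
      rw [Polynomial.aeval_algHom_apply, ← hσ, AlgEquiv.symm_apply_apply]
    obtain ⟨k, hk⟩ := exists_comp_eq_X_of_aeval_eq_X hX
    obtain ⟨Ψ, hΨ⟩ := exists_algEquiv_X_eq_aeval_X i (Polynomial.comp_eq_X_symm hk)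
    refine ⟨⟨k, hk⟩, Ψ.trans σ, ?_⟩
    rw [AlgEquiv.trans_apply, hΨ, ← Polynomial.aeval_algHom_apply, hσ, ← Polynomial.aeval_comp,
      Polynomial.comp_eq_X_symm hk, Polynomial.aeval_X]
  · rintro ⟨⟨k, hk⟩, ρ, rfl⟩
    obtain ⟨Φ, hΦ⟩ := exists_algEquiv_X_eq_aeval_X i hk
    exact ⟨Φ.trans ρ, by rw [AlgEquiv.trans_apply, hΦ, Polynomial.aeval_algHom_apply]⟩

end MvPolynomial

/-- `Q(H(x,y))` is a coordinate of `R[x,y]` iff `Q` is a coordinate of `R[y]` and `H`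
is a coordinate of `R[x,y]`; in particular the coordinates of `R[x,y]` lying in `R[y]`
are exactly the coordinates of `R[y]`. -/
theorem coordinate_comp_iff (R : Type*) [CommRing R] (Q : Polynomial R)
    (H : MvPolynomial (Fin 2) R) :
    ((∃ σ : MvPolynomial (Fin 2) R ≃ₐ[R] MvPolynomial (Fin 2) R,
        σ (MvPolynomial.X 1) = Polynomial.aeval H Q) ↔
      ((∃ σ : Polynomial R ≃ₐ[R] Polynomial R, σ Polynomial.X = Q) ∧
        (∃ σ : MvPolynomial (Fin 2) R ≃ₐ[R] MvPolynomial (Fin 2) R,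
          σ (MvPolynomial.X 1) = H))) ∧
    (∀ P : Polynomial R,
      (∃ σ : MvPolynomial (Fin 2) R ≃ₐ[R] MvPolynomial (Fin 2) R,
        σ (MvPolynomial.X 1) = Polynomial.aeval (MvPolynomial.X 1) P) ↔
      (∃ σ : Polynomial R ≃ₐ[R] Polynomial R, σ Polynomial.X = P)) :=
  ⟨MvPolynomial.exists_algEquiv_X_eq_aeval_iff 1 Q H, fun P => by
    rw [MvPolynomial.exists_algEquiv_X_eq_aeval_iff]
    exact and_iff_left ⟨.refl, rfl⟩⟩
end

section
/- Let R be an integral domain with fraction field K, and let σ be an R-algebra endomorphism of R[x,y]. Then σ is an automorphism of R[x,y] if and only if (i) the Jacobian determinant det(Jσ) evaluated at (0,0) is a unit of R, and (ii) the induced K-algebra endomorphism of K[x,y] is an automorphism. -/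
/-!
If `σ` is invertible, the chain rule makes its Jacobian matrix invertible over `R[x,y]`, and
extending scalars to `K` is functorial, so `σ_K` is invertible too.

Conversely, injectivity descends from `K[x,y]` because `R[x,y] → K[x,y]` is injective. For
surjectivity, compose `σ` with the affine change of variables that inverts its affine part at
the origin; it is defined over `R` because the Jacobian at `0` is a unit. The composite is
tangent to the identity, i.e. it fixes each variable modulo `I ^ 2`, where `I = (x, y)`, and
therefore it induces the identity on `I ^ n / I ^ (n + 1)` for every `n`. Hence if it maps
`g ∈ K[x,y]` into `R[x,y]`, the coefficients of `g` lie in `R`, degree by degree; applied to a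
preimage under `σ_K` of a polynomial over `R`, this gives surjectivity over `R`.
-/

open MvPolynomial Matrix

theorem Finsupp.exists_eq_single_of_degree_eq_one {ι : Type*} {x : ι →₀ ℕ} (h : x.degree = 1) :
    ∃ k, x = Finsupp.single k 1 := by
  classical
  obtain ⟨k, hk⟩ := Multiset.card_eq_one.1 ((Finsupp.card_toMultiset x).trans h)
  refine ⟨k, ?_⟩
  rw [← Finsupp.toMultiset_toFinsupp x, hk, ← Finsupp.toMultiset_toFinsupp (Finsupp.single k 1),
    Finsupp.toMultiset_single, one_nsmul]

namespace MvPolynomial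

variable {ι R K : Type*} [CommRing R] [CommRing K]

section IdealOfVars

variable {F : ι → MvPolynomial ι R}

theorem X_mem_idealOfVars (i : ι) : X i ∈ idealOfVars ι R :=
  Ideal.subset_span ⟨i, rfl⟩

theorem aeval_mul_sub_mul (F : ι → MvPolynomial ι R) (a b : MvPolynomial ι R) :
    aeval F (a * b) - a * b = (aeval F a - a) * aeval F b + a * (aeval F b - b) := by
  rw [map_mul]
  ring

theorem aeval_sub_self_mem_idealOfVars (hF : ∀ i, F i ∈ idealOfVars ι R)
    (p : MvPolynomial ι R) : aeval F p - p ∈ idealOfVars ι R := by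
  induction p using MvPolynomial.induction_on with
  | C a => simp
  | add p q hp hq => simpa [add_sub_add_comm] using add_mem hp hq
  | mul_X p i hp =>
    rw [aeval_mul_sub_mul, aeval_X]
    exact add_mem (Ideal.mul_mem_right _ _ hp)
      (Ideal.mul_mem_left _ _ (sub_mem (hF i) (X_mem_idealOfVars i)))

theorem aeval_mem_idealOfVars (hF : ∀ i, F i ∈ idealOfVars ι R) {p : MvPolynomial ι R}
    (hp : p ∈ idealOfVars ι R) : aeval F p ∈ idealOfVars ι R := by
  simpa using add_mem (aeval_sub_self_mem_idealOfVars hF p) hp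

theorem mem_idealOfVars_of_sub_X_mem_pow_two (hF : ∀ i, F i - X i ∈ idealOfVars ι R ^ 2)
    (i : ι) : F i ∈ idealOfVars ι R := by
  simpa using add_mem (Ideal.pow_le_self two_ne_zero (hF i)) (X_mem_idealOfVars i)

theorem aeval_sub_self_mem_pow_two (hF : ∀ i, F i - X i ∈ idealOfVars ι R ^ 2)
    {p : MvPolynomial ι R} (hp : p ∈ idealOfVars ι R) : aeval F p - p ∈ idealOfVars ι R ^ 2 := by
  have hFI := mem_idealOfVars_of_sub_X_mem_pow_two hF
  induction hp using Submodule.span_induction with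
  | mem x hx => obtain ⟨i, rfl⟩ := hx; simpa using hF i
  | zero => simp
  | add x y _ _ hx hy => simpa [add_sub_add_comm] using add_mem hx hy
  | smul c x hx hcx =>
    rw [smul_eq_mul, aeval_mul_sub_mul, pow_two]
    exact add_mem (Ideal.mul_mem_mul (aeval_sub_self_mem_idealOfVars hFI c)
      (aeval_mem_idealOfVars hFI hx)) (Ideal.mul_mem_left _ _ (pow_two (idealOfVars ι R) ▸ hcx))

theorem aeval_sub_self_mem_pow_succ (hF : ∀ i, F i - X i ∈ idealOfVars ι R ^ 2) {n : ℕ}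
    {p : MvPolynomial ι R} (hp : p ∈ idealOfVars ι R ^ n) :
    aeval F p - p ∈ idealOfVars ι R ^ (n + 1) := by
  have hFI := mem_idealOfVars_of_sub_X_mem_pow_two hF
  induction n generalizing p with
  | zero => simpa using aeval_sub_self_mem_idealOfVars hFI p
  | succ n ih =>
    rw [pow_succ] at hp
    refine Submodule.mul_induction_on hp (fun a ha b hb => ?_) fun x y hx hy => ?_
    · rw [aeval_mul_sub_mul]
      refine add_mem ?_ ?_
      · simpa [pow_succ] using Ideal.mul_mem_mul (ih ha) (aeval_mem_idealOfVars hFI hb)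
      · simpa [pow_succ, mul_assoc] using Ideal.mul_mem_mul ha (aeval_sub_self_mem_pow_two hF hb)
    · simpa [add_sub_add_comm] using add_mem hx hy

theorem map_mem_pow_idealOfVars (φ : R →+* K) {n : ℕ} {p : MvPolynomial ι R}
    (hp : p ∈ idealOfVars ι R ^ n) : map φ p ∈ idealOfVars ι K ^ n := by
  rw [mem_pow_idealOfVars_iff'] at hp ⊢
  intro x hx
  rw [coeff_map, hp x hx, map_zero]

end IdealOfVars

theorem mem_range_map_iff_coeff_mem_range {φ : R →+* K} {p : MvPolynomial ι K} :
    p ∈ (map φ).range ↔ ∀ x, coeff x p ∈ φ.range := by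
  classical
  rw [RingHom.mem_range, ← Set.mem_range, mem_range_map_iff_coeffs_subset]
  refine ⟨fun h x => ?_, fun h c hc => ?_⟩
  · by_cases hx : x ∈ p.support
    · exact h (mem_coeffs_iff.2 ⟨x, hx, rfl⟩)
    · rw [notMem_support_iff.1 hx]
      exact zero_mem φ.range
  · obtain ⟨x, -, rfl⟩ := mem_coeffs_iff.1 hc
    exact h x

section BaseChange

variable [Algebra R K]

variable (K) in
noncomputable def baseChange (σ : MvPolynomial ι R →ₐ[R] MvPolynomial ι R) :
    MvPolynomial ι K →ₐ[K] MvPolynomial ι K :=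
  aeval fun i => map (algebraMap R K) (σ (X i))

@[simp]
theorem baseChange_X (σ : MvPolynomial ι R →ₐ[R] MvPolynomial ι R) (i : ι) :
    baseChange K σ (X i) = map (algebraMap R K) (σ (X i)) :=
  aeval_X _ _

theorem baseChange_map (σ : MvPolynomial ι R →ₐ[R] MvPolynomial ι R) (p : MvPolynomial ι R) :
    baseChange K σ (map (algebraMap R K) p) = map (algebraMap R K) (σ p) := by
  induction p using MvPolynomial.induction_on with
  | C a => simp [baseChange, ← algebraMap_eq]
  | add p q hp hq => simp only [map_add, hp, hq]
  | mul_X p i hp => simp only [map_mul, map_X, hp, baseChange_X]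

theorem baseChange_comp (σ ρ : MvPolynomial ι R →ₐ[R] MvPolynomial ι R) :
    baseChange K (σ.comp ρ) = (baseChange K σ).comp (baseChange K ρ) :=
  algHom_ext fun i => by simp only [AlgHom.comp_apply, baseChange_X, baseChange_map]

theorem baseChange_id : baseChange K (AlgHom.id R (MvPolynomial ι R)) = AlgHom.id K _ :=
  algHom_ext fun i => by simp

theorem baseChange_apply_baseChange_of_comp_eq_id
    {σ ρ : MvPolynomial ι R →ₐ[R] MvPolynomial ι R} (h : σ.comp ρ = AlgHom.id R _)
    (p : MvPolynomial ι K) : baseChange K σ (baseChange K ρ p) = p := by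
  rw [← AlgHom.comp_apply, ← baseChange_comp, h, baseChange_id, AlgHom.id_apply]

theorem bijective_baseChange {σ : MvPolynomial ι R →ₐ[R] MvPolynomial ι R}
    (hσ : Function.Bijective σ) : Function.Bijective (baseChange K σ) := by
  set E := AlgEquiv.ofBijective σ hσ
  have h₁ : σ.comp E.symm = AlgHom.id R _ := AlgHom.ext E.apply_symm_apply
  have h₂ : (E.symm : MvPolynomial ι R →ₐ[R] _).comp σ = AlgHom.id R _ :=
    AlgHom.ext E.symm_apply_apply
  exact Function.bijective_iff_has_inverse.2 ⟨baseChange K E.symm,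
    baseChange_apply_baseChange_of_comp_eq_id h₂, baseChange_apply_baseChange_of_comp_eq_id h₁⟩

theorem injective_of_injective_baseChange (hK : Function.Injective (algebraMap R K))
    {σ : MvPolynomial ι R →ₐ[R] MvPolynomial ι R} (hσ : Function.Injective (baseChange K σ)) :
    Function.Injective σ := fun p q hpq => by
  apply map_injective _ hK
  apply hσ
  rw [baseChange_map, baseChange_map, hpq]

def IsTangentToIdentity (σ : MvPolynomial ι R →ₐ[R] MvPolynomial ι R) : Prop :=
  ∀ i, σ (X i) - X i ∈ idealOfVars ι R ^ 2

theorem mem_range_map_of_baseChange_mem_range {σ : MvPolynomial ι R →ₐ[R] MvPolynomial ι R}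
    (hσ : IsTangentToIdentity σ) {g : MvPolynomial ι K}
    (hg : baseChange K σ g ∈ (map (algebraMap R K)).range) :
    g ∈ (map (algebraMap R K)).range := by
  set φ := algebraMap R K
  have hF : ∀ i, map φ (σ (X i)) - X i ∈ idealOfVars ι K ^ 2 := fun i => by
    simpa using map_mem_pow_idealOfVars φ (hσ i)
  have approx : ∀ n, ∃ q, g - map φ q ∈ idealOfVars ι K ^ n := by
    intro n
    induction n with
    | zero => exact ⟨0, by simp⟩
    | succ n ih =>
      obtain ⟨q, hq⟩ := ih
      set e := g - map φ q
      have he : baseChange K σ e ∈ (map φ).range := by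
        obtain ⟨p, hp⟩ := hg
        exact ⟨p - σ q, by rw [map_sub, hp, map_sub, baseChange_map]⟩
      have hcoeff : ∀ x, x.degree = n → coeff x e ∈ φ.range := by
        intro x hx
        have := (mem_pow_idealOfVars_iff' _ _).1 (aeval_sub_self_mem_pow_succ hF hq) x (by omega)
        rw [coeff_sub, sub_eq_zero] at this
        rw [← this]
        exact mem_range_map_iff_coeff_mem_range.1 he x
      obtain ⟨r, hr⟩ : homogeneousComponent n e ∈ (map φ).range := by
        refine mem_range_map_iff_coeff_mem_range.2 fun x => ?_
        rw [coeff_homogeneousComponent]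
        split_ifs with hx
        exacts [hcoeff x hx, zero_mem _]
      refine ⟨q + r, (mem_pow_idealOfVars_iff' _ _).2 fun x hx => ?_⟩
      rw [map_add, hr, ← sub_sub, coeff_sub, coeff_homogeneousComponent]
      split_ifs with hxn
      · exact sub_self _
      · rw [(mem_pow_idealOfVars_iff' _ _).1 hq x (by omega), sub_zero]
  refine mem_range_map_iff_coeff_mem_range.2 fun x => ?_
  obtain ⟨q, hq⟩ := approx (x.degree + 1)
  have := (mem_pow_idealOfVars_iff' _ _).1 hq x (lt_add_one _)
  rw [coeff_sub, sub_eq_zero, coeff_map] at this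
  exact ⟨coeff x q, this.symm⟩

theorem IsTangentToIdentity.surjective_of_surjective_baseChange
    (hK : Function.Injective (algebraMap R K)) {σ : MvPolynomial ι R →ₐ[R] MvPolynomial ι R}
    (hσ : IsTangentToIdentity σ) (hσK : Function.Surjective (baseChange K σ)) :
    Function.Surjective σ := by
  intro p
  obtain ⟨g, hg⟩ := hσK (map (algebraMap R K) p)
  obtain ⟨q, rfl⟩ := mem_range_map_of_baseChange_mem_range hσ ⟨p, hg.symm⟩
  exact ⟨q, map_injective _ hK (by rw [← baseChange_map, hg])⟩

end BaseChange

section Jacobian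

noncomputable def jacobian (F : ι → MvPolynomial ι R) : Matrix ι ι (MvPolynomial ι R) :=
  Matrix.of fun i j => pderiv j (F i)

theorem jacobian_X [DecidableEq ι] : jacobian (X : ι → MvPolynomial ι R) = 1 := by
  ext i j
  simp [jacobian, pderiv_X, Matrix.one_apply, Pi.single_apply]

theorem eval_zero_pderiv (j : ι) (p : MvPolynomial ι R) :
    eval 0 (pderiv j p) = coeff (Finsupp.single j 1) p := by
  rw [eval_zero, constantCoeff_eq, coeff_pderiv]
  simp

variable [Fintype ι]

theorem pderiv_aeval (F : ι → MvPolynomial ι R) (j : ι) (p : MvPolynomial ι R) :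
    pderiv j (aeval F p) = ∑ i, aeval F (pderiv i p) * pderiv j (F i) := by
  classical
  induction p using MvPolynomial.induction_on with
  | C a => simp
  | add p q hp hq => simp only [map_add, hp, hq, add_mul, Finset.sum_add_distrib]
  | mul_X p k hp =>
    simp only [map_mul, aeval_X, Derivation.leibniz, pderiv_X, hp, smul_eq_mul, map_add,
      add_mul, Finset.sum_add_distrib, Pi.single_apply]
    simp [Finset.mul_sum, mul_comm, mul_left_comm]

theorem jacobian_aeval (F G : ι → MvPolynomial ι R) :
    jacobian (fun i => aeval F (G i)) = (jacobian G).map (aeval F) * jacobian F := by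
  refine Matrix.ext fun i j => ?_
  simp only [jacobian, Matrix.of_apply, Matrix.map_apply, Matrix.mul_apply, pderiv_aeval]

theorem isUnit_det_jacobian_of_bijective [DecidableEq ι]
    {σ : MvPolynomial ι R →ₐ[R] MvPolynomial ι R} (hσ : Function.Bijective σ) :
    IsUnit (jacobian fun i => σ (X i)).det := by
  set E := AlgEquiv.ofBijective σ hσ
  have hinv : (fun i => aeval (fun k => σ (X k)) (E.symm (X i))) = X := by
    funext i
    change aeval (σ ∘ X) _ = _
    rw [← aeval_unique]
    exact E.apply_symm_apply (X i)
  have := congrArg Matrix.det (jacobian_aeval (fun k => σ (X k)) fun i => E.symm (X i))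
  rw [hinv, jacobian_X, Matrix.det_one, Matrix.det_mul] at this
  exact IsUnit.of_mul_eq_one_right _ this.symm

end Jacobian

section Affine

variable [Fintype ι]

noncomputable def affineSubst (A : Matrix ι ι R) (b : ι → R) : ι → MvPolynomial ι R :=
  A.map C *ᵥ X + C ∘ b

theorem aeval_affineSubst (u : ι → MvPolynomial ι R) (A : Matrix ι ι R) (b : ι → R) (i : ι) :
    aeval u (affineSubst A b i) = (A.map C *ᵥ u + C ∘ b : ι → MvPolynomial ι R) i := by
  simp [affineSubst, Matrix.mulVec, dotProduct, map_sum, algebraMap_eq]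

theorem aeval_affineSubst_affineSubst (A A' : Matrix ι ι R) (b b' : ι → R) (i : ι) :
    aeval (affineSubst A b) (affineSubst A' b' i) = affineSubst (A' * A) (A' *ᵥ b + b') i := by
  rw [aeval_affineSubst, affineSubst, Matrix.mulVec_add, Matrix.mulVec_mulVec, ← Matrix.map_mul]
  simp [affineSubst, RingHom.map_mulVec, Function.comp_def, add_assoc]

theorem affineSubst_one_zero [DecidableEq ι] : affineSubst (1 : Matrix ι ι R) 0 = X := by
  rw [affineSubst, Matrix.map_one _ (map_zero C) (map_one C), Matrix.one_mulVec]
  simp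

theorem sub_affineSubst_jacobian_mem_pow_idealOfVars (F : ι → MvPolynomial ι R) (i : ι) :
    F i - affineSubst ((jacobian F).map (eval 0)) (fun k => eval 0 (F k)) i ∈
      idealOfVars ι R ^ 2 := by
  classical
  have hlin : affineSubst ((jacobian F).map (eval 0)) (fun k => eval 0 (F k)) i =
      ∑ j, C (coeff (Finsupp.single j 1) (F i)) * X j + C (coeff 0 (F i)) := by
    simp only [affineSubst, Pi.add_apply, Matrix.mulVec, dotProduct, Matrix.map_apply, jacobian,
      Matrix.of_apply, eval_zero_pderiv, Function.comp_apply]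
    rw [eval_zero, constantCoeff_eq]
  rw [hlin, mem_pow_idealOfVars_iff']
  intro x hx
  obtain hx | hx : x.degree = 0 ∨ x.degree = 1 := by omega
  · rw [Finsupp.degree_eq_zero_iff] at hx
    subst hx
    simp [coeff_sum, coeff_C_mul, coeff_X]
  · obtain ⟨k, rfl⟩ := Finsupp.exists_eq_single_of_degree_eq_one hx
    simp [coeff_sum, coeff_C_mul, coeff_X, coeff_C, Finsupp.single_left_inj, eq_comm]

theorem surjective_of_isUnit_det_jacobian [DecidableEq ι] [Algebra R K]
    (hK : Function.Injective (algebraMap R K)) {σ : MvPolynomial ι R →ₐ[R] MvPolynomial ι R}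
    (hJ : IsUnit (eval 0 (jacobian fun i => σ (X i)).det))
    (hσK : Function.Surjective (baseChange K σ)) : Function.Surjective σ := by
  set F := fun i => σ (X i)
  set M := (jacobian F).map (eval 0)
  set a := fun k => eval 0 (F k)
  have hM : IsUnit M.det := RingHom.map_det (eval 0) (jacobian F) ▸ hJ
  set T : MvPolynomial ι R →ₐ[R] MvPolynomial ι R := aeval (affineSubst M⁻¹ (-(M⁻¹ *ᵥ a)))
  have hright : T.comp (aeval (affineSubst M a)) = AlgHom.id R _ :=
    algHom_ext fun i => by
      rw [AlgHom.comp_apply, aeval_X, aeval_affineSubst_affineSubst, mul_nonsing_inv _ hM,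
        mulVec_neg, mulVec_mulVec, mul_nonsing_inv _ hM, one_mulVec, neg_add_cancel,
        affineSubst_one_zero, AlgHom.id_apply]
  have hleft : ∀ i, aeval (affineSubst M a) (affineSubst M⁻¹ (-(M⁻¹ *ᵥ a)) i) = X i := by
    intro i
    rw [aeval_affineSubst_affineSubst, nonsing_inv_mul _ hM, add_neg_cancel,
      affineSubst_one_zero]
  have htangent : IsTangentToIdentity (σ.comp T) := by
    intro i
    rw [AlgHom.comp_apply, aeval_X, DFunLike.congr_fun (aeval_unique σ), ← hleft i,
      aeval_affineSubst, aeval_affineSubst, Pi.add_apply, Pi.add_apply, add_sub_add_right_eq_sub,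
      ← Pi.sub_apply, ← mulVec_sub]
    exact Ideal.sum_mem _ fun j _ =>
      Ideal.mul_mem_left _ _ (sub_affineSubst_jacobian_mem_pow_idealOfVars F j)
  refine Function.Surjective.of_comp (g := T) (htangent.surjective_of_surjective_baseChange hK ?_)
  rw [baseChange_comp]
  exact hσK.comp fun p => ⟨_, baseChange_apply_baseChange_of_comp_eq_id hright p⟩

end Affine

end MvPolynomial

/-- An `R`-algebra endomorphism `σ` of `R[x,y]` (over a domain `R` with fraction field
`K`) is an automorphism iff its Jacobian determinant at the origin is a unit of `R` and
the induced endomorphism of `K[x,y]` is an automorphism. -/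
theorem automorphism_iff_jacobian_and_fraction_field (R : Type*) [CommRing R] [IsDomain R]
    (σ : MvPolynomial (Fin 2) R →ₐ[R] MvPolynomial (Fin 2) R) :
    Function.Bijective σ ↔
      (IsUnit (eval (fun _ => (0 : R))
          (pderiv 0 (σ (X 0)) * pderiv 1 (σ (X 1)) -
            pderiv 0 (σ (X 1)) * pderiv 1 (σ (X 0)))) ∧
        Function.Bijective
          (aeval (R := FractionRing R)
            (fun i => MvPolynomial.map (algebraMap R (FractionRing R)) (σ (X i)))
            : MvPolynomial (Fin 2) (FractionRing R) →ₐ[FractionRing R]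
              MvPolynomial (Fin 2) (FractionRing R))) := by
  have hK : Function.Injective (algebraMap R (FractionRing R)) := IsFractionRing.injective R _
  have hdet : pderiv 0 (σ (X 0)) * pderiv 1 (σ (X 1)) - pderiv 0 (σ (X 1)) * pderiv 1 (σ (X 0)) =
      (jacobian fun i => σ (X i)).det := by
    rw [Matrix.det_fin_two]
    simp only [jacobian, Matrix.of_apply]
    ring
  rw [hdet]
  change _ ↔ _ ∧ Function.Bijective (baseChange (FractionRing R) σ)
  exact ⟨fun h => ⟨(isUnit_det_jacobian_of_bijective h).map _, bijective_baseChange h⟩,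
    fun ⟨hJ, hσK⟩ => ⟨injective_of_injective_baseChange hK hσK.1,
      surjective_of_isUnit_det_jacobian hK hJ hσK.2⟩⟩
end

section
/- Let K be a field of characteristic 0, R = K[z], p₁ = z², Q₁(y) = y + z·y², Q₂(y) = y − z·y², and let F(x,y) = −z⁻²·y + z⁻²·Q₂(z²·x + Q₁(y)). Then F(x,y) = x − 2y(zx + y²) − z(zx + y²)² ∈ R[x,y], and the pair (F(x,y), z²x + y + zy²) defines an R-algebra automorphism of R[x,y] (the Nagata automorphism). -/
open MvPolynomial

/-! The Nagata map is `exp (w • D)` for the locally nilpotent derivation `D = -2y ∂ₓ + c ∂_y`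
of `R[x,y]`, whose kernel contains `w = cx + y²` (here `c = z`). Replacing `w` by `t • w` gives
a one-parameter family `φₜ` of endomorphisms fixing `w`, and the exponential law
`φₛ ∘ φₜ = φₛ₊ₜ` is a polynomial identity on the two generators; so `φ₁` is an automorphism
with inverse `φ₋₁`. -/

namespace MvPolynomial

variable {R : Type*} [CommRing R]

noncomputable def nagataInvariant (c : R) : MvPolynomial (Fin 2) R :=
  C c * X 0 + X 1 ^ 2

noncomputable def nagataFlow (c t : R) : MvPolynomial (Fin 2) R →ₐ[R] MvPolynomial (Fin 2) R :=
  aeval ![X 0 - 2 * X 1 * (C t * nagataInvariant c) - C c * (C t * nagataInvariant c) ^ 2,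
    X 1 + C c * (C t * nagataInvariant c)]

@[simp]
theorem nagataFlow_X_zero (c t : R) :
    nagataFlow c t (X 0) =
      X 0 - 2 * X 1 * (C t * nagataInvariant c) - C c * (C t * nagataInvariant c) ^ 2 := by
  simp [nagataFlow]

@[simp]
theorem nagataFlow_X_one (c t : R) :
    nagataFlow c t (X 1) = X 1 + C c * (C t * nagataInvariant c) := by
  simp [nagataFlow]

@[simp]
theorem nagataFlow_nagataInvariant (c t : R) :
    nagataFlow c t (nagataInvariant c) = nagataInvariant c := by
  conv_lhs => rw [nagataInvariant]
  simp only [map_add, map_mul, map_pow, algHom_C, algebraMap_eq, nagataFlow_X_zero,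
    nagataFlow_X_one, nagataInvariant]
  ring

theorem nagataFlow_comp (c s t : R) :
    (nagataFlow c s).comp (nagataFlow c t) = nagataFlow c (s + t) := by
  refine algHom_ext <| Fin.forall_fin_two.2 ⟨?_, ?_⟩ <;>
  · simp only [AlgHom.comp_apply, nagataFlow_X_zero, nagataFlow_X_one, map_add, map_sub,
      map_mul, map_pow, map_ofNat, algHom_C, algebraMap_eq, nagataFlow_nagataInvariant]
    ring

theorem nagataFlow_zero (c : R) : nagataFlow c 0 = AlgHom.id R _ :=
  algHom_ext <| Fin.forall_fin_two.2 ⟨by simp, by simp⟩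

noncomputable def nagataEquiv (c t : R) : MvPolynomial (Fin 2) R ≃ₐ[R] MvPolynomial (Fin 2) R :=
  AlgEquiv.ofAlgHom (nagataFlow c t) (nagataFlow c (-t))
    (by rw [nagataFlow_comp, add_neg_cancel, nagataFlow_zero])
    (by rw [nagataFlow_comp, neg_add_cancel, nagataFlow_zero])

@[simp]
theorem nagataEquiv_apply (c t : R) (p : MvPolynomial (Fin 2) R) :
    nagataEquiv c t p = nagataFlow c t p :=
  rfl

end MvPolynomial

theorem nagata_automorphism_general (K : Type*) [Field K]
    (z : MvPolynomial (Fin 2) (Polynomial K)) (hz : z = C Polynomial.X)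
    (F : MvPolynomial (Fin 2) (Polynomial K))
    (hF : F = X 0 - 2 * X 1 * (z * X 0 + X 1 ^ 2) - z * (z * X 0 + X 1 ^ 2) ^ 2) :
    z ^ 2 * F =
      -(X 1) + ((z ^ 2 * X 0 + (X 1 + z * X 1 ^ 2)) -
        z * (z ^ 2 * X 0 + (X 1 + z * X 1 ^ 2)) ^ 2) ∧
    ∃ σ : MvPolynomial (Fin 2) (Polynomial K) ≃ₐ[Polynomial K]
        MvPolynomial (Fin 2) (Polynomial K),
      σ (X 0) = F ∧ σ (X 1) = z ^ 2 * X 0 + X 1 + z * X 1 ^ 2 := by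
  refine ⟨by rw [hF]; ring, nagataEquiv Polynomial.X 1, ?_, ?_⟩
  · simp [nagataInvariant, hF, hz]
  · simp only [nagataEquiv_apply, nagataFlow_X_one, nagataInvariant, map_one, one_mul, hz]
    ring

/-- The Nagata automorphism: with `R = K[z]`, `p₁ = z²`, `Q₁(y) = y + zy²`,
`Q₂(y) = y − zy²`, the polynomial `F = −z⁻²y + z⁻²Q₂(z²x + Q₁(y))` satisfies
`z²·F = −y + Q₂(z²x + Q₁(y))`, equals `x − 2y(zx+y²) − z(zx+y²)²`, and the pair
`(F, z²x + y + zy²)` defines an `R`-algebra automorphism of `R[x,y]`. -/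
theorem nagata_automorphism (K : Type*) [Field K] [CharZero K]
    (z : MvPolynomial (Fin 2) (Polynomial K)) (hz : z = C Polynomial.X)
    (F : MvPolynomial (Fin 2) (Polynomial K))
    (hF : F = X 0 - 2 * X 1 * (z * X 0 + X 1 ^ 2) - z * (z * X 0 + X 1 ^ 2) ^ 2) :
    z ^ 2 * F =
      -(X 1) + ((z ^ 2 * X 0 + (X 1 + z * X 1 ^ 2)) -
        z * (z ^ 2 * X 0 + (X 1 + z * X 1 ^ 2)) ^ 2) ∧
    ∃ σ : MvPolynomial (Fin 2) (Polynomial K) ≃ₐ[Polynomial K]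
        MvPolynomial (Fin 2) (Polynomial K),
      σ (X 0) = F ∧ σ (X 1) = z ^ 2 * X 0 + X 1 + z * X 1 ^ 2 :=
  nagata_automorphism_general K z hz F hF
end

section
/- Let R be a UFD and let p₁, p₂ ∈ qt(R)^× and Q₁, Q₂ ∈ qt(R)[y] with deg Q₁ ≥ 1, deg Q₂ ≥ 2, Q₁(0) = Q₂(0) = 0, Q₁ ∈ R[y], p₁ ∈ R with gcd(p₁, content of Q₁) = 1, and F(x,y) = p₂·y + Q₂(p₁·x + Q₁(y)) ∈ R[x,y]. Then p₁·p₂ ∈ R. -/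
/-!
The derivation `D f = ∂ₓu · ∂_y f − ∂_y u · ∂ₓ f` (the Jacobian determinant of `(u, f)`) kills
every polynomial in `u`. For `u = p₁x + Q₁(y)` it therefore sends `F = p₂y + Q₂(u)` to
`p₂ · ∂ₓu = p₁p₂`. Since `p₁` and `Q₁` have coefficients in `R`, so does `D`, and `D F₀` is a
polynomial over `R` whose image over `qt(R)` is the constant `p₁p₂`.
-/

open MvPolynomial

namespace MvPolynomial

variable {σ S T : Type*} [CommRing S] [CommRing T]

noncomputable def jacobianDerivation (i j : σ) (u : MvPolynomial σ S) :
    Derivation S (MvPolynomial σ S) (MvPolynomial σ S) :=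
  pderiv i u • pderiv j - pderiv j u • pderiv i

variable {i j : σ} {u : MvPolynomial σ S}

theorem jacobianDerivation_apply (f : MvPolynomial σ S) :
    jacobianDerivation i j u f = pderiv i u * pderiv j f - pderiv j u * pderiv i f :=
  rfl

theorem jacobianDerivation_aeval_self (P : Polynomial S) :
    jacobianDerivation i j u (Polynomial.aeval u P) = 0 := by
  rw [Derivation.map_aeval, jacobianDerivation_apply, mul_comm, sub_self, smul_zero]

theorem jacobianDerivation_X (hij : i ≠ j) : jacobianDerivation i j u (X j) = pderiv i u := by
  simp [jacobianDerivation_apply, pderiv_X_of_ne hij.symm]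

theorem map_jacobianDerivation (f : S →+* T) (F : MvPolynomial σ S) :
    map f (jacobianDerivation i j u F) = jacobianDerivation i j (map f u) (map f F) := by
  simp only [jacobianDerivation_apply, map_sub, map_mul, pderiv_map]

theorem map_aeval_X (f : S →+* T) (k : σ) (P : Polynomial S) :
    map f (Polynomial.aeval (X k) P) = Polynomial.aeval (X k) (P.map f) := by
  rw [← map_X f k]
  exact Polynomial.map_aeval_eq_aeval_map (map_comp_C f).symm P _

theorem pderiv_C_mul_X_add_aeval_X (hij : i ≠ j) (a : S) (Q : Polynomial S) :
    pderiv i (C a * X i + Polynomial.aeval (X j) Q) = C a := by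
  simp [pderiv_X_of_ne hij.symm]

theorem apply_coeff_zero_of_map_eq_C {f : S →+* T} {G : MvPolynomial σ S} {c : T}
    (h : map f G = C c) : f (coeff 0 G) = c := by
  simpa [coeff_map] using congrArg (coeff 0) h

end MvPolynomial

theorem reduced_quadruplet_product_in_ring_general (R : Type*) [CommRing R]
    (p₁ p₂ : FractionRing R) (Q₁ Q₂ : Polynomial (FractionRing R))
    (r₁ : R) (hr₁ : algebraMap R (FractionRing R) r₁ = p₁)
    (P₁ : Polynomial R) (hP₁ : P₁.map (algebraMap R (FractionRing R)) = Q₁)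
    (F₀ : MvPolynomial (Fin 2) R)
    (hF₀ : MvPolynomial.map (algebraMap R (FractionRing R)) F₀ =
      C p₂ * X 1 + Polynomial.aeval (C p₁ * X 0 + Polynomial.aeval (X 1) Q₁) Q₂) :
    ∃ r : R, algebraMap R (FractionRing R) r = p₁ * p₂ := by
  set u₀ : MvPolynomial (Fin 2) R := C r₁ * X 0 + Polynomial.aeval (X 1) P₁
  have hu : map (algebraMap R (FractionRing R)) u₀ = C p₁ * X 0 + Polynomial.aeval (X 1) Q₁ := by
    rw [map_add, map_mul, map_C, map_X, map_aeval_X, hr₁, hP₁]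
  have hG : map (algebraMap R (FractionRing R)) (jacobianDerivation 0 1 u₀ F₀) = C (p₁ * p₂) := by
    rw [map_jacobianDerivation, hu, hF₀, map_add, jacobianDerivation_aeval_self, add_zero,
      Derivation.leibniz, jacobianDerivation_X zero_ne_one,
      pderiv_C_mul_X_add_aeval_X zero_ne_one]
    simp [mul_comm]
  exact ⟨_, apply_coeff_zero_of_map_eq_C hG⟩

/-- For a reduced quadruplet `(p₁,p₂,Q₁,Q₂)` over a UFD `R` with
`F = p₂y + Q₂(p₁x+Q₁(y)) ∈ R[x,y]`, the product `p₁p₂` lies in `R`. -/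
theorem reduced_quadruplet_product_in_ring (R : Type*) [CommRing R] [IsDomain R]
    [UniqueFactorizationMonoid R]
    (p₁ p₂ : FractionRing R) (Q₁ Q₂ : Polynomial (FractionRing R))
    (hp₁ : p₁ ≠ 0) (hp₂ : p₂ ≠ 0)
    (hd₁ : 1 ≤ Q₁.natDegree) (hd₂ : 2 ≤ Q₂.natDegree)
    (h₁0 : Q₁.eval 0 = 0) (h₂0 : Q₂.eval 0 = 0)
    (r₁ : R) (hr₁ : algebraMap R (FractionRing R) r₁ = p₁)
    (P₁ : Polynomial R) (hP₁ : P₁.map (algebraMap R (FractionRing R)) = Q₁)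
    (hgcd : ∀ t : R, t ∣ r₁ → (∀ i, t ∣ P₁.coeff i) → IsUnit t)
    (F₀ : MvPolynomial (Fin 2) R)
    (hF₀ : MvPolynomial.map (algebraMap R (FractionRing R)) F₀ =
      C p₂ * X 1 + Polynomial.aeval (C p₁ * X 0 + Polynomial.aeval (X 1) Q₁) Q₂) :
    ∃ r : R, algebraMap R (FractionRing R) r = p₁ * p₂ :=
  reduced_quadruplet_product_in_ring_general R p₁ p₂ Q₁ Q₂ r₁ hr₁ P₁ hP₁ F₀ hF₀
end

section
/- Let R be a UFD and (p₁,p₂,Q₁,Q₂) a reduced quadruplet with F(x,y) = p₂·y + Q₂(p₁·x + Q₁(y)) ∈ R[x,y]. Then p₂ ∈ R if and only if Q₂ ∈ R[y]. -/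
/-!
Put `u = r₁x + P₁(y) ∈ R[x,y]`, so that `F = p₂y + Q₂(u)`. If `Q₂ ∈ R[y]`, then
`p₂y = F - Q₂(u)` has coefficients in `R`. Conversely, if `p₂ ∈ R`, then `Q₂(u) ∈ R[x,y]`.
Write `d • Q₂ = P ∈ R[T]` with `d ≠ 0`, so that `d` divides `P(u)`. For every prime `p` of `R`,
`gcd(r₁, P₁) = 1` and `P₁(0) = 0` make `u mod p` transcendental over `R/(p)`. Hence `p ∣ P(u)`
forces `p ∣ P`, and induction on the prime factors of `d` gives `d ∣ P`.
-/

open MvPolynomial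

namespace MvPolynomial

variable {R σ : Type*} [CommRing R]

theorem map_polynomial_aeval {S : Type*} [CommRing S] (f : R →+* S) (u : MvPolynomial σ R)
    (P : Polynomial R) :
    map f (Polynomial.aeval u P) = Polynomial.aeval (map f u) (P.map f) :=
  Polynomial.map_aeval_eq_aeval_map (map_comp_C f).symm P u

theorem transcendental_C_mul_X_add_aeval_X [IsDomain R] {i j : σ} (hij : i ≠ j) {s : R}
    {h : Polynomial R} (h0 : h.coeff 0 = 0) (hsh : s ≠ 0 ∨ h ≠ 0) :
    Transcendental R (C s * X i + Polynomial.aeval (X j) h : MvPolynomial σ R) := by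
  classical
  by_cases hs : s = 0
  · have hh : h ≠ 0 := hsh.resolve_left (not_not.mpr hs)
    have hdeg : h.natDegree ≠ 0 := fun hd => hh <| by
      rw [Polynomial.eq_C_of_natDegree_eq_zero hd, h0, map_zero]
    rw [hs, C_0, zero_mul, zero_add, transcendental_polynomial_aeval_X_iff]
    exact h.transcendental hdeg
      (mem_nonZeroDivisors_of_ne_zero (Polynomial.leadingCoeff_ne_zero.mpr hh))
  · let ev : MvPolynomial σ R →ₐ[R] Polynomial R := aeval (Pi.single i Polynomial.X)
    have hev : ev (C s * X i + Polynomial.aeval (X j) h) = Polynomial.C s * Polynomial.X := by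
      rw [map_add, ← Polynomial.aeval_algHom_apply]
      simp [ev, hij.symm, Polynomial.aeval_def, Polynomial.eval₂_at_zero, h0]
    have hlin : Transcendental R (Polynomial.C s * Polynomial.X) :=
      (Polynomial.C s * Polynomial.X).transcendental
        (by rw [Polynomial.natDegree_C_mul_X s hs]; exact one_ne_zero)
        (mem_nonZeroDivisors_of_ne_zero (by rwa [Polynomial.leadingCoeff_C_mul_X]))
    exact fun halg => hlin (hev ▸ halg.algHom ev)

theorem transcendental_map_mk_C_mul_X_add_aeval_X {i j : σ} (hij : i ≠ j) {p : R}
    (hp : Prime p) {r : R} {P : Polynomial R} (h0 : P.coeff 0 = 0)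
    (hcop : ∀ t : R, t ∣ r → (∀ n, t ∣ P.coeff n) → IsUnit t) :
    Transcendental (R ⧸ Ideal.span {p})
      (map (Ideal.Quotient.mk (Ideal.span {p})) (C r * X i + Polynomial.aeval (X j) P)) := by
  have := (Ideal.span_singleton_prime hp.ne_zero).mpr hp
  rw [map_add, map_mul, map_C, map_X, map_polynomial_aeval, map_X]
  refine transcendental_C_mul_X_add_aeval_X hij (by rw [Polynomial.coeff_map, h0, map_zero]) ?_
  by_contra! hzero
  refine hp.not_isUnit (hcop p ((Ideal.Quotient.eq_zero_iff_dvd p r).mp hzero.1) fun n => ?_)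
  rw [← Ideal.Quotient.eq_zero_iff_dvd, ← Polynomial.coeff_map, hzero.2, Polynomial.coeff_zero]

theorem C_dvd_of_C_dvd_aeval_of_transcendental {p : R} {u : MvPolynomial σ R}
    (hu : Transcendental (R ⧸ Ideal.span {p}) (map (Ideal.Quotient.mk (Ideal.span {p})) u))
    {P : Polynomial R} (hdvd : C p ∣ Polynomial.aeval u P) : Polynomial.C p ∣ P := by
  have hmk := Ideal.Quotient.eq_zero_iff_dvd p
  rw [C_dvd_iff_map_hom_eq_zero _ _ hmk, map_polynomial_aeval] at hdvd
  have hP := transcendental_iff.mp hu _ hdvd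
  rw [Polynomial.C_dvd_iff_dvd_coeff]
  intro n
  rw [← hmk, ← Polynomial.coeff_map, hP, Polynomial.coeff_zero]

theorem C_dvd_of_C_dvd_aeval [IsDomain R] [UniqueFactorizationMonoid R] {u : MvPolynomial σ R}
    (hu : ∀ p : R, Prime p →
      Transcendental (R ⧸ Ideal.span {p}) (map (Ideal.Quotient.mk (Ideal.span {p})) u))
    {d : R} (hd : d ≠ 0) {P : Polynomial R} (hdvd : C d ∣ Polynomial.aeval u P) :
    Polynomial.C d ∣ P := by
  induction d using UniqueFactorizationMonoid.induction_on_prime generalizing P with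
  | h₁ => exact absurd rfl hd
  | h₂ x hx => exact (Polynomial.isUnit_C.mpr hx).dvd
  | h₃ a p ha hp ih =>
    obtain ⟨P', rfl⟩ := C_dvd_of_C_dvd_aeval_of_transcendental (hu p hp)
      ((map_dvd C (dvd_mul_right p a)).trans hdvd)
    rw [map_mul (Polynomial.aeval u), Polynomial.aeval_C, algebraMap_eq, C_mul,
      mul_dvd_mul_iff_left (C_ne_zero.mpr hp.ne_zero)] at hdvd
    rw [Polynomial.C_mul]
    exact mul_dvd_mul_left _ (ih ha hdvd)

theorem exists_map_eq_of_aeval_mem_range [IsDomain R] [UniqueFactorizationMonoid R]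
    {K : Type*} [Field K] [Algebra R K] [IsFractionRing R K] {u : MvPolynomial σ R}
    (hu : ∀ p : R, Prime p →
      Transcendental (R ⧸ Ideal.span {p}) (map (Ideal.Quotient.mk (Ideal.span {p})) u))
    {Q : Polynomial K}
    (hQ : ∃ G : MvPolynomial σ R,
      map (algebraMap R K) G = Polynomial.aeval (map (algebraMap R K) u) Q) :
    ∃ P : Polynomial R, P.map (algebraMap R K) = Q := by
  obtain ⟨G, hG⟩ := hQ
  have hinj := IsFractionRing.injective R K
  obtain ⟨b, hb, hbQ⟩ := IsLocalization.integerNormalization_spec (nonZeroDivisors R) Q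
  rw [← algebraMap_smul K b Q, Polynomial.smul_eq_C_mul] at hbQ
  have hPG : Polynomial.aeval u (IsLocalization.integerNormalization (nonZeroDivisors R) Q)
      = C b * G := by
    refine map_injective _ hinj ?_
    rw [map_polynomial_aeval, hbQ, map_mul, Polynomial.aeval_C, algebraMap_eq, map_mul, map_C, hG]
  obtain ⟨P, hP⟩ := C_dvd_of_C_dvd_aeval hu (nonZeroDivisors.ne_zero hb) ⟨G, hPG⟩
  have hb0 : algebraMap R K b ≠ 0 := (map_ne_zero_iff _ hinj).mpr (nonZeroDivisors.ne_zero hb)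
  refine ⟨P, mul_left_cancel₀ (Polynomial.C_ne_zero.mpr hb0) ?_⟩
  rw [← hbQ, hP, Polynomial.map_mul, Polynomial.map_C]

end MvPolynomial

theorem reduced_quadruplet_p₂_in_ring_iff_general (R : Type*) [CommRing R] [IsDomain R]
    [UniqueFactorizationMonoid R]
    (p₁ p₂ : FractionRing R) (Q₁ Q₂ : Polynomial (FractionRing R))
    (h₁0 : Q₁.eval 0 = 0)
    (r₁ : R) (hr₁ : algebraMap R (FractionRing R) r₁ = p₁)
    (P₁ : Polynomial R) (hP₁ : P₁.map (algebraMap R (FractionRing R)) = Q₁)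
    (hgcd : ∀ t : R, t ∣ r₁ → (∀ i, t ∣ P₁.coeff i) → IsUnit t)
    (F₀ : MvPolynomial (Fin 2) R)
    (hF₀ : MvPolynomial.map (algebraMap R (FractionRing R)) F₀ =
      C p₂ * X 1 + Polynomial.aeval (C p₁ * X 0 + Polynomial.aeval (X 1) Q₁) Q₂) :
    (∃ r : R, algebraMap R (FractionRing R) r = p₂) ↔
      (∃ P₂ : Polynomial R, P₂.map (algebraMap R (FractionRing R)) = Q₂) := by
  set u : MvPolynomial (Fin 2) R := C r₁ * X 0 + Polynomial.aeval (X 1) P₁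
  have hu : map (algebraMap R (FractionRing R)) u = C p₁ * X 0 + Polynomial.aeval (X 1) Q₁ := by
    rw [map_add, map_mul, map_C, map_X, map_polynomial_aeval, map_X, hr₁, hP₁]
  have hP₁0 : P₁.coeff 0 = 0 := IsFractionRing.injective R (FractionRing R) <| by
    rw [← Polynomial.coeff_map, hP₁, Polynomial.coeff_zero_eq_eval_zero, h₁0, map_zero]
  constructor
  · rintro ⟨r₂, rfl⟩
    refine exists_map_eq_of_aeval_mem_range
      (fun p hp => transcendental_map_mk_C_mul_X_add_aeval_X (show (0 : Fin 2) ≠ 1 by decide)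
        hp hP₁0 hgcd)
      ⟨F₀ - C r₂ * X 1, ?_⟩
    rw [map_sub, hF₀, hu, map_mul, map_C, map_X, add_sub_cancel_left]
  · rintro ⟨P₂, rfl⟩
    refine ⟨coeff (Finsupp.single 1 1) (F₀ - Polynomial.aeval u P₂), ?_⟩
    rw [← coeff_map, map_sub, hF₀, map_polynomial_aeval, hu, add_sub_cancel_right]
    simp [coeff_C_mul, coeff_X]

/-- For a reduced quadruplet `(p₁,p₂,Q₁,Q₂)` over a UFD `R` with
`F = p₂y + Q₂(p₁x+Q₁(y)) ∈ R[x,y]`, we have `p₂ ∈ R` iff `Q₂ ∈ R[y]`. -/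
theorem reduced_quadruplet_p₂_in_ring_iff (R : Type*) [CommRing R] [IsDomain R]
    [UniqueFactorizationMonoid R]
    (p₁ p₂ : FractionRing R) (Q₁ Q₂ : Polynomial (FractionRing R))
    (hp₁ : p₁ ≠ 0) (hp₂ : p₂ ≠ 0)
    (hd₁ : 1 ≤ Q₁.natDegree) (hd₂ : 2 ≤ Q₂.natDegree)
    (h₁0 : Q₁.eval 0 = 0) (h₂0 : Q₂.eval 0 = 0)
    (r₁ : R) (hr₁ : algebraMap R (FractionRing R) r₁ = p₁)
    (P₁ : Polynomial R) (hP₁ : P₁.map (algebraMap R (FractionRing R)) = Q₁)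
    (hgcd : ∀ t : R, t ∣ r₁ → (∀ i, t ∣ P₁.coeff i) → IsUnit t)
    (F₀ : MvPolynomial (Fin 2) R)
    (hF₀ : MvPolynomial.map (algebraMap R (FractionRing R)) F₀ =
      C p₂ * X 1 + Polynomial.aeval (C p₁ * X 0 + Polynomial.aeval (X 1) Q₁) Q₂) :
    (∃ r : R, algebraMap R (FractionRing R) r = p₂) ↔
      (∃ P₂ : Polynomial R, P₂.map (algebraMap R (FractionRing R)) = Q₂) :=
  reduced_quadruplet_p₂_in_ring_iff_general R p₁ p₂ Q₁ Q₂ h₁0 r₁ hr₁ P₁ hP₁ hgcd F₀ hF₀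
end
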